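/- Set N := (−1, 0, 0, −1) ∈ ℝ⁴ and, for z = x + iy ∈ ℂ, E(z) := (−(x − iy), 1, −i, −(x − iy)) ∈ ℂ⁴ (so that E = ∂_z Q and N = ∂_z∂_z̄ Q). Then for every z ∈ ℂ and all u, v ∈ ℝ⁴: B(u,v) = −½[(u·Q(z))(v·N) + (v·Q(z))(u·N)] + ½[(u·E(z))·conj(v·E(z)) + (v·E(z))·conj(u·E(z))], where u·E(z) := Σ_{μ=0}^{3} uᵘ Eᵘ(z) ∈ ℂ. (This is the identity η_{μν} = −q_{(μ}∂_z∂_z̄q_{ν)} + ∂_z q_{(μ}∂_z̄ q_{ν)} used in the hard/soft decomposition of supermomenta.) -/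

import Mathlib

/-!
Write `a_u := u⁰ + u³`, so that `u·N = -a_u` and `u·E(z) = (u¹ - a_u x) + i (a_u y - u²)`.
The symmetrised product `(u·E) conj(v·E) + (v·E) conj(u·E)` is twice the real part of
`(u·E) conj(v·E)`, so the right-hand side is real, and expanding it in the coordinates `x, y`
all terms involving `z` cancel against those of `(u·Q)(v·N) + (v·Q)(u·N)`, leaving
`u¹v¹ + u²v² - ½[(u⁰ + u³)(v⁰ - v³) + (u⁰ - u³)(v⁰ + v³)] = B(u, v)`.
-/

noncomputable section

/-- The null embedding of the celestial sphere into the light-cone of Minkowski space. -/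
def Q (z : ℂ) : Fin 4 → ℝ :=
  ![-1 - z.re ^ 2 - z.im ^ 2, 2 * z.re, 2 * z.im, 1 - z.re ^ 2 - z.im ^ 2]

/-- The contraction `p·Q(z) = Σ_μ pᵘ Qᵘ(z)`. -/
def dotQ (p : Fin 4 → ℝ) (z : ℂ) : ℝ := ∑ μ : Fin 4, p μ * Q z μ

/-- The Minkowski bilinear form on `ℝ⁴`. -/
def mink (u v : Fin 4 → ℝ) : ℝ :=
  -(u 0 * v 0) + u 1 * v 1 + u 2 * v 2 + u 3 * v 3

/-- The constant null vector `N = ∂_z∂_z̄ Q = (−1, 0, 0, −1)`. -/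
def Nvec : Fin 4 → ℝ := ![-1, 0, 0, -1]

/-- The contraction `v·N = Σ_μ vᵘ Nᵘ`. -/
def dotN (v : Fin 4 → ℝ) : ℝ := ∑ μ : Fin 4, v μ * Nvec μ

/-- The polarization vector `E(z) = ∂_z Q = (−z̄, 1, −i, −z̄)`. -/
def Evec (z : ℂ) : Fin 4 → ℂ :=
  ![-(starRingEnd ℂ z), 1, -Complex.I, -(starRingEnd ℂ z)]

/-- The contraction `u·E(z) = Σ_μ uᵘ Eᵘ(z)`. -/
def dotE (u : Fin 4 → ℝ) (z : ℂ) : ℂ := ∑ μ : Fin 4, (u μ : ℂ) * Evec z μ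

open ComplexConjugate

theorem Complex.mul_conj_add_mul_conj (a b : ℂ) :
    a * conj b + b * conj a = ((2 * (a * conj b).re : ℝ) : ℂ) := by
  rw [← Complex.add_conj, map_mul, Complex.conj_conj, mul_comm b]

theorem dotQ_eq (p : Fin 4 → ℝ) (z : ℂ) :
    dotQ p z = -(p 0 - p 3) - (p 0 + p 3) * (z.re ^ 2 + z.im ^ 2)
      + 2 * (p 1 * z.re + p 2 * z.im) := by
  simp only [dotQ, Q, Fin.sum_univ_four, Matrix.cons_val]
  ring

theorem dotN_eq (v : Fin 4 → ℝ) : dotN v = -(v 0 + v 3) := by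
  simp only [dotN, Nvec, Fin.sum_univ_four, Matrix.cons_val]
  ring

theorem re_dotE (u : Fin 4 → ℝ) (z : ℂ) : (dotE u z).re = u 1 - (u 0 + u 3) * z.re := by
  simp only [dotE, Evec, Fin.sum_univ_four, Matrix.cons_val, Complex.add_re, Complex.mul_re,
    Complex.neg_re, Complex.neg_im, Complex.ofReal_re, Complex.ofReal_im, Complex.conj_re,
    Complex.conj_im, Complex.one_re, Complex.one_im, Complex.I_re, Complex.I_im]
  ring

theorem im_dotE (u : Fin 4 → ℝ) (z : ℂ) : (dotE u z).im = (u 0 + u 3) * z.im - u 2 := by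
  simp only [dotE, Evec, Fin.sum_univ_four, Matrix.cons_val, Complex.add_im, Complex.mul_im,
    Complex.neg_re, Complex.neg_im, Complex.ofReal_re, Complex.ofReal_im, Complex.conj_re,
    Complex.conj_im, Complex.one_re, Complex.one_im, Complex.I_re, Complex.I_im]
  ring

theorem mink_eq_dotQ_dotN_add_re_dotE_mul_conj (z : ℂ) (u v : Fin 4 → ℝ) :
    mink u v = -(1 / 2) * (dotQ u z * dotN v + dotQ v z * dotN u)
      + (dotE u z * conj (dotE v z)).re := by
  simp only [Complex.mul_re, Complex.conj_re, Complex.conj_im, re_dotE, im_dotE, dotQ_eq,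
    dotN_eq, mink]
  ring

/-- The identity `η_{μν} = −q_{(μ}∂_z∂_z̄q_{ν)} + ∂_z q_{(μ}∂_z̄ q_{ν)}`: for all `z`
and all `u, v ∈ ℝ⁴`,
`B(u,v) = −½[(u·Q)(v·N) + (v·Q)(u·N)] + ½[(u·E)conj(v·E) + (v·E)conj(u·E)]`. -/
theorem minkowski_metric_decomposition (z : ℂ) (u v : Fin 4 → ℝ) :
    ((mink u v : ℝ) : ℂ) =
      -(1 / 2) * (((dotQ u z : ℝ) : ℂ) * ((dotN v : ℝ) : ℂ)
          + ((dotQ v z : ℝ) : ℂ) * ((dotN u : ℝ) : ℂ))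
      + (1 / 2) * (dotE u z * starRingEnd ℂ (dotE v z)
          + dotE v z * starRingEnd ℂ (dotE u z)) := by
  rw [Complex.mul_conj_add_mul_conj, mink_eq_dotQ_dotN_add_re_dotE_mul_conj z]
  push_cast
  ring
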